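/- Let (m_i)_{i≥1} be a sequence of odd positive integers such that m_i → ∞ and (log₂ m_i)/ℓ_{m_i} → 0 as i → ∞. For each i, let Q_i be the fraction of pairs (a(X), b(X)) ∈ J_{m_i} × J_{m_i} such that dim C_{a,b} = m_i − 1. Then lim_{i→∞} Q_i = 1. -/

import Mathlib

open Polynomial

noncomputable section

/-- The polynomial `X^m - 1` over `Z/2`. -/
def fm (m : ℕ) : Polynomial (ZMod 2) := X ^ m - 1

/-- The polynomial `X^m - 1` over `Z/4`. -/
def fm4 (m : ℕ) : Polynomial (ZMod 4) := X ^ m - 1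

/-- `R_m = (Z/2)[X]/⟨X^m - 1⟩`. -/
abbrev R2 (m : ℕ) : Type := Polynomial (ZMod 2) ⧸ Ideal.span {fm m}

/-- `R'_m = (Z/4)[X]/⟨X^m - 1⟩`. -/
abbrev R4 (m : ℕ) : Type := Polynomial (ZMod 4) ⧸ Ideal.span {fm4 m}

def mk2 (m : ℕ) : Polynomial (ZMod 2) →+* R2 m := Ideal.Quotient.mk _

def mk4 (m : ℕ) : Polynomial (ZMod 4) →+* R4 m := Ideal.Quotient.mk _

/-- The canonical representative (of degree `< m`) of an element of `R2 m`. -/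
def rep2 (m : ℕ) (r : R2 m) : Polynomial (ZMod 2) :=
  (Function.surjInv (Ideal.Quotient.mk_surjective (I := Ideal.span {fm m})) r) %ₘ fm m

/-- The canonical representative (of degree `< m`) of an element of `R4 m`. -/
def rep4 (m : ℕ) (r : R4 m) : Polynomial (ZMod 4) :=
  (Function.surjInv (Ideal.Quotient.mk_surjective (I := Ideal.span {fm4 m})) r) %ₘ fm4 m

/-- Coefficientwise doubling map `(Z/2)[X] → (Z/4)[X]`, `a ↦ 2a` on each coefficient. -/
def polyDbl (p : Polynomial (ZMod 2)) : Polynomial (ZMod 4) :=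
  ∑ i ∈ p.support, Polynomial.C (2 * ((p.coeff i).val : ZMod 4)) * X ^ i

/-- The additive embedding `R_m → R'_m`, `f ↦ 2f`. -/
def iota (m : ℕ) (r : R2 m) : R4 m := mk4 m (polyDbl (rep2 m r))

/-- Hamming weight of an element of `R_m` (of its coefficient vector). -/
def wt2 (m : ℕ) (r : R2 m) : ℕ := (rep2 m r).support.card

/-- Lee weight of an element of `Z/4`. -/
def lee (x : ZMod 4) : ℕ := min x.val (4 - x.val)

/-- Lee weight of an element of `R'_m` (of its coefficient vector). -/
def wtLee (m : ℕ) (r : R4 m) : ℕ := ∑ i ∈ (rep4 m r).support, lee ((rep4 m r).coeff i)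

/-- The augmentation ideal `J_m = ⟨X - 1⟩` of `R_m`. -/
def Jm (m : ℕ) : Ideal (R2 m) := Ideal.span {mk2 m (X - 1)}

/-- The `Z2Z4`-additive cyclic code `C_{a,b} = {(f·a, 2(f·b)) : f ∈ R_m}`. -/
def Cab (m : ℕ) (a b : R2 m) : Set (R2 m × R4 m) :=
  {w | ∃ f : R2 m, w = (f * a, iota m (f * b))}

/-- Dimension of `C_{a,b}` as a vector space over `Z/2`, i.e. `log₂ |C_{a,b}|`. -/
def dimCab (m : ℕ) (a b : R2 m) : ℕ := Nat.log 2 (Nat.card (Cab m a b))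

/-- `(X^m - 1)/(X - 1) = X^{m-1} + ⋯ + X + 1` over `Z/2`. -/
def geomPoly (m : ℕ) : Polynomial (ZMod 2) := ∑ i ∈ Finset.range m, X ^ i

/-- `ℓ_m`: minimal degree of the irreducible factors of `(X^m-1)/(X-1)` in `(Z/2)[X]`. -/
def ell (m : ℕ) : ℕ :=
  sInf {d | ∃ p : Polynomial (ZMod 2), Irreducible p ∧ p ∣ geomPoly m ∧ p.natDegree = d}

/-- The binary entropy function `H(x) = -x·log₂x - (1-x)·log₂(1-x)`. -/
def Hent (x : ℝ) : ℝ := -(x * Real.logb 2 x) - (1 - x) * Real.logb 2 (1 - x)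

/-!
For lifts `A`, `B` of `a`, `b`, the code `C_{a,b}` is the image of `R_m` under `f ↦ (f a, f b)`
followed by the injective doubling map on the second factor. The kernel of `f ↦ (f a, f b)` is the
ideal generated by `(X^m - 1) / D` with `D = gcd(X^m - 1, A, B)`, so `dim C_{a,b} = m - deg D`.
For `a, b ∈ J_m` the factor `X - 1` divides `D`, so `dim C_{a,b} < m - 1` forces an irreducible
factor `p` of `(X^m - 1)/(X - 1)` with `(X - 1) p` dividing both `a` and `b`. For each `p` this
happens for a fraction `4^(-deg p) ≤ 4^(-ℓ_m)` of the pairs in `J_m × J_m`, and there are fewer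
than `m` such `p`. Eventually `log₂ m ≤ ℓ_m`, i.e. `m ≤ 2^ℓ_m`, and then the exceptional fraction
is at most `m · 4^(-ℓ_m) ≤ 1/m`.
-/

lemma eq_of_mk_eq_of_degree_lt {R : Type*} [CommRing R] [Nontrivial R] {f p q : R[X]}
    (hf : f.Monic) (hp : p.degree < f.degree) (hq : q.degree < f.degree)
    (h : Ideal.Quotient.mk (Ideal.span {f}) p = Ideal.Quotient.mk (Ideal.span {f}) q) :
    p = q := by
  rw [Ideal.Quotient.eq, Ideal.mem_span_singleton] at h
  rw [← (modByMonic_eq_self_iff hf).2 hp, ← (modByMonic_eq_self_iff hf).2 hq,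
    modByMonic_eq_of_dvd_sub hf h]

lemma card_degreeLT (R : Type*) [Semiring R] (n : ℕ) :
    Nat.card (degreeLT R n) = Nat.card R ^ n := by
  rw [Nat.card_congr (degreeLTEquiv R n).toEquiv, Nat.card_fun, Nat.card_fin]

section Multiples

variable {K : Type*} [Field K]

lemma mul_mem_degreeLT_iff {q c : K[X]} (hq : q.Monic) (k : ℕ) :
    q * c ∈ degreeLT K (q.natDegree + k) ↔ c ∈ degreeLT K k := by
  rw [mem_degreeLT, mem_degreeLT, mul_comm, hq.degree_mul, degree_eq_natDegree hq.ne_zero,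
    Nat.cast_add, add_comm]
  exact ⟨lt_of_add_lt_add_left, fun h => WithBot.add_lt_add_left (by simp) h⟩

lemma card_dvd_degreeLT {q : K[X]} (hq : q.Monic) {n : ℕ} (hqn : q.natDegree ≤ n) :
    Nat.card {x : degreeLT K n // q ∣ x.1} = Nat.card K ^ (n - q.natDegree) := by
  obtain ⟨k, rfl⟩ := Nat.exists_eq_add_of_le hqn
  rw [Nat.add_sub_cancel_left, ← card_degreeLT]
  refine (Nat.card_eq_of_bijective
    (fun c => ⟨⟨q * c, (mul_mem_degreeLT_iff hq k).2 c.2⟩, dvd_mul_right _ _⟩) ⟨?_, ?_⟩).symm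
  · intro c c' h
    exact Subtype.ext (mul_left_cancel₀ hq.ne_zero (congrArg (fun x => x.1.1) h))
  · rintro ⟨⟨x, hx⟩, c, rfl : x = q * c⟩
    exact ⟨⟨c, (mul_mem_degreeLT_iff hq k).1 hx⟩, rfl⟩

end Multiples

variable {m : ℕ}

lemma fm_monic (hm : 0 < m) : (fm m).Monic := leadingCoeff_X_pow_sub_one hm

lemma degree_fm (hm : 0 < m) : (fm m).degree = m := by
  simpa [fm] using degree_X_pow_sub_C (R := ZMod 2) hm 1

lemma natDegree_fm (hm : 0 < m) : (fm m).natDegree = m :=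
  natDegree_eq_of_degree_eq_some (degree_fm hm)

lemma natDegree_le_of_dvd_fm (hm : 0 < m) {P : (ZMod 2)[X]} (h : P ∣ fm m) : P.natDegree ≤ m :=
  natDegree_fm hm ▸ natDegree_le_of_dvd h (fm_monic hm).ne_zero

lemma mk2_surjective : Function.Surjective (mk2 m) := Ideal.Quotient.mk_surjective

lemma mk2_eq_zero_iff {p : (ZMod 2)[X]} : mk2 m p = 0 ↔ fm m ∣ p := by
  rw [mk2, Ideal.Quotient.eq_zero_iff_mem, Ideal.mem_span_singleton]

lemma mk2_eq_mk2_iff {p q : (ZMod 2)[X]} : mk2 m p = mk2 m q ↔ fm m ∣ p - q := by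
  rw [mk2, Ideal.Quotient.eq, Ideal.mem_span_singleton]

lemma mk2_fm : mk2 m (fm m) = 0 := mk2_eq_zero_iff.2 dvd_rfl

lemma mk2_rep2 (r : R2 m) : mk2 m (rep2 m r) = r := by
  rw [rep2, modByMonic_eq_sub_mul_div, map_sub, map_mul, mk2_fm, zero_mul, sub_zero]
  exact Function.surjInv_eq _ r

lemma degree_rep2_lt (hm : 0 < m) (r : R2 m) : (rep2 m r).degree < (fm m).degree :=
  degree_modByMonic_lt _ (fm_monic hm)

lemma rep2_mk2 (hm : 0 < m) {p : (ZMod 2)[X]} (hp : p.degree < m) : rep2 m (mk2 m p) = p := by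
  rw [← degree_fm hm] at hp
  exact eq_of_mk_eq_of_degree_lt (fm_monic hm) (degree_rep2_lt hm _) hp (mk2_rep2 _)

def rep2Equiv (hm : 0 < m) : R2 m ≃ degreeLT (ZMod 2) m where
  toFun r := ⟨rep2 m r, mem_degreeLT.2 (degree_fm hm ▸ degree_rep2_lt hm r)⟩
  invFun p := mk2 m p
  left_inv := mk2_rep2
  right_inv p := Subtype.ext (rep2_mk2 hm (mem_degreeLT.1 p.2))

lemma card_R2 (hm : 0 < m) : Nat.card (R2 m) = 2 ^ m := by
  rw [Nat.card_congr (rep2Equiv hm), card_degreeLT, Nat.card_zmod]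

lemma mk2_dvd_mk2_iff {q F : (ZMod 2)[X]} (hq : q ∣ fm m) : mk2 m q ∣ mk2 m F ↔ q ∣ F := by
  refine ⟨fun ⟨g, hg⟩ => ?_, map_dvd (mk2 m)⟩
  obtain ⟨G, rfl⟩ := mk2_surjective g
  rw [← map_mul, mk2_eq_mk2_iff] at hg
  exact (dvd_sub_left (dvd_mul_right q G)).1 (hq.trans hg)

lemma mem_span_mk2_iff {q : (ZMod 2)[X]} (hq : q ∣ fm m) (r : R2 m) :
    r ∈ Ideal.span {mk2 m q} ↔ q ∣ rep2 m r := by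
  rw [Ideal.mem_span_singleton, ← mk2_dvd_mk2_iff hq, mk2_rep2]

lemma card_span_mk2 (hm : 0 < m) {q : (ZMod 2)[X]} (hq : q.Monic) (hqf : q ∣ fm m) :
    Nat.card (Ideal.span {mk2 m q}) = 2 ^ (m - q.natDegree) := by
  rw [Nat.card_congr ((Equiv.subtypeEquivRight (mem_span_mk2_iff hqf)).trans
    (Equiv.subtypeEquiv (p := fun r => q ∣ rep2 m r) (q := fun x => q ∣ x.1) (rep2Equiv hm)
      fun _ => Iff.rfl)), card_dvd_degreeLT hq (natDegree_le_of_dvd_fm hm hqf), Nat.card_zmod]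

lemma coeff_polyDbl (p : (ZMod 2)[X]) (n : ℕ) :
    (polyDbl p).coeff n = 2 * ((p.coeff n).val : ZMod 4) := by
  rw [polyDbl, finsetSum_coeff]
  simp only [coeff_C_mul_X_pow, Finset.sum_ite_eq, mem_support_iff]
  split_ifs with h
  · rfl
  · simp [not_not.1 h]

lemma polyDbl_injective : Function.Injective polyDbl := by
  have hdouble : ∀ x y : ZMod 2, 2 * (x.val : ZMod 4) = 2 * y.val → x = y := by decide
  intro p q h
  ext n
  have hn := congrArg (coeff · n) h
  simp only [coeff_polyDbl] at hn
  exact hdouble _ _ hn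

lemma degree_polyDbl_le (p : (ZMod 2)[X]) : (polyDbl p).degree ≤ p.degree :=
  (degree_le_iff_coeff_zero _ _).2 fun n hn => by
    simp [coeff_polyDbl, coeff_eq_zero_of_degree_lt hn]

lemma iota_injective (hm : 0 < m) : Function.Injective (iota m) := by
  have : Fact (1 < 4) := ⟨by norm_num⟩
  have hdeg (r : R2 m) : (polyDbl (rep2 m r)).degree < (fm4 m).degree := by
    have : (fm4 m).degree = (fm m).degree := by
      rw [degree_fm hm]
      simpa [fm4] using degree_X_pow_sub_C (R := ZMod 4) hm 1
    exact (degree_polyDbl_le _).trans_lt (this ▸ degree_rep2_lt hm r)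
  intro r s h
  have hrep := eq_of_mk_eq_of_degree_lt (leadingCoeff_X_pow_sub_one hm) (hdeg r) (hdeg s) h
  rw [← mk2_rep2 r, ← mk2_rep2 s, polyDbl_injective hrep]

lemma dvd_mul_and_dvd_mul_iff {α : Type*} [CommMonoidWithZero α] [GCDMonoid α] {k a b f : α} :
    k ∣ f * a ∧ k ∣ f * b ↔ k ∣ gcd k (gcd a b) * f := by
  rw [dvd_gcd_mul_iff_dvd_mul, ← dvd_gcd_iff, (gcd_mul_left' f a b).dvd_iff_dvd_right, mul_comm]

def codeMap (m : ℕ) (a b : R2 m) : R2 m →+ R2 m × R2 m :=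
  (AddMonoidHom.mulRight a).prod (AddMonoidHom.mulRight b)

lemma mk2_mem_ker_codeMap_iff (A B F : (ZMod 2)[X]) :
    mk2 m F ∈ (codeMap m (mk2 m A) (mk2 m B)).ker ↔ fm m ∣ F * A ∧ fm m ∣ F * B := by
  rw [AddMonoidHom.mem_ker, ← mk2_eq_zero_iff, ← mk2_eq_zero_iff, map_mul, map_mul]
  exact Prod.mk_eq_zero

lemma Cab_eq_image_range (a b : R2 m) :
    Cab m a b = Prod.map id (iota m) '' (codeMap m a b).range := by
  ext w
  constructor
  · rintro ⟨f, rfl⟩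
    exact ⟨(f * a, f * b), ⟨f, rfl⟩, rfl⟩
  · rintro ⟨_, ⟨f, rfl⟩, rfl⟩
    exact ⟨f, rfl⟩

lemma monic_gcd_fm (hm : 0 < m) (P : (ZMod 2)[X]) : (gcd (fm m) P).Monic := by
  rw [← normalize_gcd]
  exact monic_normalize fun h => (fm_monic hm).ne_zero ((gcd_eq_zero_iff _ _).1 h).1

lemma card_ker_codeMap (hm : 0 < m) (A B : (ZMod 2)[X]) :
    Nat.card (codeMap m (mk2 m A) (mk2 m B)).ker = 2 ^ (gcd (fm m) (gcd A B)).natDegree := by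
  have hD := monic_gcd_fm hm (gcd A B)
  obtain ⟨q, hfq⟩ : gcd (fm m) (gcd A B) ∣ fm m := gcd_dvd_left _ _
  have hq : q.Monic := hD.of_mul_monic_left (hfq ▸ fm_monic hm)
  have hqf : q ∣ fm m := Dvd.intro_left _ hfq.symm
  have hker (r : R2 m) :
      r ∈ (codeMap m (mk2 m A) (mk2 m B)).ker ↔ r ∈ Ideal.span {mk2 m q} := by
    obtain ⟨F, rfl⟩ := mk2_surjective r
    rw [mk2_mem_ker_codeMap_iff, Ideal.mem_span_singleton, mk2_dvd_mk2_iff hqf,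
      dvd_mul_and_dvd_mul_iff]
    nth_rewrite 1 [hfq]
    exact mul_dvd_mul_iff_left hD.ne_zero
  have hdeg := congrArg natDegree hfq
  rw [hD.natDegree_mul hq, natDegree_fm hm] at hdeg
  rw [Nat.card_congr (Equiv.subtypeEquivRight hker), card_span_mk2 hm hq hqf]
  congr 1
  omega

lemma card_Cab (hm : 0 < m) (a b : R2 m) :
    Nat.card (Cab m a b) = Nat.card (codeMap m a b).range := by
  rw [Cab_eq_image_range, Nat.card_image_of_injective
    (Function.injective_id.prodMap (iota_injective hm))]
  rfl

lemma dimCab_mk2 (hm : 0 < m) (A B : (ZMod 2)[X]) :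
    dimCab m (mk2 m A) (mk2 m B) = m - (gcd (fm m) (gcd A B)).natDegree := by
  have hsplit := (codeMap m (mk2 m A) (mk2 m B)).ker.card_mul_index
  rw [AddSubgroup.index_ker, card_ker_codeMap hm, card_R2 hm] at hsplit
  have hD := natDegree_le_of_dvd_fm hm (gcd_dvd_left (fm m) (gcd A B))
  rw [show 2 ^ m = 2 ^ (m - _) * 2 ^ _ by rw [← pow_add, Nat.sub_add_cancel hD]] at hsplit
  have hrange := Nat.eq_of_mul_eq_mul_left (by positivity) (hsplit.trans (mul_comm _ _))
  rw [dimCab, card_Cab hm, hrange, Nat.log_pow (by norm_num)]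

lemma fm_eq_mul_geomPoly : fm m = (X - 1) * geomPoly m := by
  rw [fm, geomPoly, mul_comm, geom_sum_mul]

lemma X_sub_one_dvd_fm : (X - 1 : (ZMod 2)[X]) ∣ fm m := Dvd.intro _ fm_eq_mul_geomPoly.symm

lemma geomPoly_ne_zero (hm : 0 < m) : geomPoly m ≠ 0 :=
  right_ne_zero_of_mul (fm_eq_mul_geomPoly ▸ (fm_monic hm).ne_zero)

lemma monic_X_sub_one : (X - 1 : (ZMod 2)[X]).Monic := by
  simpa using monic_X_sub_C (1 : ZMod 2)

lemma natDegree_X_sub_one : (X - 1 : (ZMod 2)[X]).natDegree = 1 := by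
  simpa using natDegree_X_sub_C (1 : ZMod 2)

lemma natDegree_geomPoly (hm : 0 < m) : (geomPoly m).natDegree = m - 1 := by
  have h := congrArg natDegree (fm_eq_mul_geomPoly (m := m))
  rw [natDegree_fm hm, monic_X_sub_one.natDegree_mul' (geomPoly_ne_zero hm),
    natDegree_X_sub_one] at h
  omega

lemma card_Jm (hm : 0 < m) : Nat.card (Jm m) = 2 ^ (m - 1) := by
  rw [Jm, card_span_mk2 hm monic_X_sub_one X_sub_one_dvd_fm, natDegree_X_sub_one]

open UniqueFactorizationMonoid in
def geomPolyFactors (m : ℕ) : Finset (ZMod 2)[X] := (normalizedFactors (geomPoly m)).toFinset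

lemma mem_geomPolyFactors_iff (hm : 0 < m) {p : (ZMod 2)[X]} :
    p ∈ geomPolyFactors m ↔ Irreducible p ∧ p.Monic ∧ p ∣ geomPoly m := by
  classical
  rw [geomPolyFactors, Multiset.mem_toFinset,
    Polynomial.mem_normalizedFactors_iff (geomPoly_ne_zero hm)]

open UniqueFactorizationMonoid in
lemma card_geomPolyFactors_le (hm : 0 < m) : (geomPolyFactors m).card ≤ m - 1 := by
  set F := normalizedFactors (geomPoly m)
  have hdeg : ∀ d ∈ F.map natDegree, 1 ≤ d := by
    simp only [Multiset.mem_map]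
    rintro _ ⟨p, hp, rfl⟩
    exact (irreducible_of_normalized_factor p hp).natDegree_pos
  calc (geomPolyFactors m).card ≤ Multiset.card F := Multiset.toFinset_card_le F
    _ = Multiset.card (F.map natDegree) • 1 := by simp
    _ ≤ (F.map natDegree).sum := Multiset.card_nsmul_le_sum hdeg
    _ = F.prod.natDegree := (natDegree_multiset_prod _ (zero_notMem_normalizedFactors _)).symm
    _ = m - 1 := by
      rw [natDegree_eq_of_degree_eq (degree_eq_degree_of_associated
        (prod_normalizedFactors (geomPoly_ne_zero hm))), natDegree_geomPoly hm]

lemma X_sub_one_mul_dvd_fm {p : (ZMod 2)[X]} (hp : p ∣ geomPoly m) : (X - 1) * p ∣ fm m := by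
  rw [fm_eq_mul_geomPoly]
  exact mul_dvd_mul_left _ hp

lemma card_span_X_sub_one_mul (hm : 0 < m) {p : (ZMod 2)[X]} (hp : p ∈ geomPolyFactors m) :
    Nat.card (Ideal.span {mk2 m ((X - 1) * p)}) = 2 ^ (m - 1 - p.natDegree) := by
  obtain ⟨-, hmon, hpg⟩ := (mem_geomPolyFactors_iff hm).1 hp
  rw [card_span_mk2 hm (monic_X_sub_one.mul hmon) (X_sub_one_mul_dvd_fm hpg),
    monic_X_sub_one.natDegree_mul hmon, natDegree_X_sub_one, Nat.sub_sub]

lemma natDegree_le_of_mem_geomPolyFactors (hm : 0 < m) {p : (ZMod 2)[X]}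
    (hp : p ∈ geomPolyFactors m) : p.natDegree ≤ m - 1 :=
  natDegree_geomPoly hm ▸
    natDegree_le_of_dvd ((mem_geomPolyFactors_iff hm).1 hp).2.2 (geomPoly_ne_zero hm)

lemma ell_le_natDegree (hm : 0 < m) {p : (ZMod 2)[X]} (hp : p ∈ geomPolyFactors m) :
    ell m ≤ p.natDegree := by
  obtain ⟨hirr, -, hdvd⟩ := (mem_geomPolyFactors_iff hm).1 hp
  exact Nat.sInf_le ⟨p, hirr, hdvd, rfl⟩

lemma one_le_ell (hm : 2 ≤ m) : 1 ≤ ell m := by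
  have hunit : ¬ IsUnit (geomPoly m) := fun h => by
    have := natDegree_eq_zero_of_isUnit h
    rw [natDegree_geomPoly (by omega)] at this
    omega
  obtain ⟨p, hirr, hdvd⟩ :=
    WfDvdMonoid.exists_irreducible_factor hunit (geomPoly_ne_zero (by omega))
  exact le_csInf ⟨_, p, hirr, hdvd, rfl⟩ fun _ ⟨q, hq, _, hd⟩ => hd ▸ hq.natDegree_pos

open UniqueFactorizationMonoid in
lemma exists_factor_mul_dvd (hm : 0 < m) {D : (ZMod 2)[X]} (hXD : X - 1 ∣ D) (hDf : D ∣ fm m)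
    (hD : 1 < D.natDegree) : ∃ p ∈ geomPolyFactors m, (X - 1) * p ∣ D := by
  classical
  obtain ⟨E, rfl⟩ := hXD
  have hE0 : E ≠ 0 := by rintro rfl; simp at hD
  have hEg : E ∣ geomPoly m := by
    rw [fm_eq_mul_geomPoly] at hDf
    exact (mul_dvd_mul_iff_left monic_X_sub_one.ne_zero).1 hDf
  have hEunit : ¬ IsUnit E := fun h => by
    rw [monic_X_sub_one.natDegree_mul' hE0, natDegree_X_sub_one,
      natDegree_eq_zero_of_isUnit h] at hD
    omega
  obtain ⟨p, hp⟩ := exists_mem_normalizedFactors hE0 hEunit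
  obtain ⟨hirr, hmon, hpE⟩ := (Polynomial.mem_normalizedFactors_iff hE0).1 hp
  exact ⟨p, (mem_geomPolyFactors_iff hm).2 ⟨hirr, hmon, hpE.trans hEg⟩, mul_dvd_mul_left _ hpE⟩

lemma exists_factor_of_dimCab_ne (hm : 0 < m) {a b : R2 m} (ha : a ∈ Jm m) (hb : b ∈ Jm m)
    (hab : dimCab m a b ≠ m - 1) :
    ∃ p ∈ geomPolyFactors m,
      a ∈ Ideal.span {mk2 m ((X - 1) * p)} ∧ b ∈ Ideal.span {mk2 m ((X - 1) * p)} := by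
  have hXa := (mem_span_mk2_iff X_sub_one_dvd_fm a).1 ha
  have hXb := (mem_span_mk2_iff X_sub_one_dvd_fm b).1 hb
  rw [← mk2_rep2 a, ← mk2_rep2 b, dimCab_mk2 hm] at hab
  set D := gcd (fm m) (gcd (rep2 m a) (rep2 m b))
  have hXD : X - 1 ∣ D := dvd_gcd X_sub_one_dvd_fm (dvd_gcd hXa hXb)
  have hD1 := natDegree_le_of_dvd hXD (monic_gcd_fm hm _).ne_zero
  rw [natDegree_X_sub_one] at hD1
  have hDm := natDegree_le_of_dvd_fm hm (gcd_dvd_left (fm m) (gcd (rep2 m a) (rep2 m b)))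
  obtain ⟨p, hp, hpD⟩ := exists_factor_mul_dvd hm hXD (gcd_dvd_left _ _) (by omega)
  have hpf := X_sub_one_mul_dvd_fm ((mem_geomPolyFactors_iff hm).1 hp).2.2
  exact ⟨p, hp,
    (mem_span_mk2_iff hpf a).2 (hpD.trans ((gcd_dvd_right _ _).trans (gcd_dvd_left _ _))),
    (mem_span_mk2_iff hpf b).2 (hpD.trans ((gcd_dvd_right _ _).trans (gcd_dvd_right _ _)))⟩

def badPairs (m : ℕ) : Set (R2 m × R2 m) :=
  ((Jm m : Set (R2 m)) ×ˢ (Jm m : Set (R2 m))) \ {p | dimCab m p.1 p.2 = m - 1}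

lemma finite_R2 (hm : 0 < m) : Finite (R2 m) :=
  Nat.finite_of_card_ne_zero (by rw [card_R2 hm]; positivity)

lemma ncard_badPairs_mul_le (hm : 0 < m) :
    (badPairs m).ncard * 4 ^ ell m ≤ (m - 1) * 4 ^ (m - 1) := by
  have := finite_R2 hm
  let I (p : (ZMod 2)[X]) : Set (R2 m) := Ideal.span {mk2 m ((X - 1) * p)}
  have hsub : badPairs m ⊆ ⋃ p ∈ geomPolyFactors m, I p ×ˢ I p := by
    rintro ⟨a, b⟩ ⟨⟨ha, hb⟩, hab⟩
    obtain ⟨p, hp, hap, hbp⟩ := exists_factor_of_dimCab_ne hm ha hb hab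
    exact Set.mem_biUnion hp ⟨hap, hbp⟩
  have hterm (p) (hp : p ∈ geomPolyFactors m) :
      (I p ×ˢ I p).ncard * 4 ^ ell m ≤ 4 ^ (m - 1) := by
    have hI : (I p).ncard = 2 ^ (m - 1 - p.natDegree) := card_span_X_sub_one_mul hm hp
    rw [Set.ncard_prod, hI, ← mul_pow]
    calc (2 * 2) ^ (m - 1 - p.natDegree) * 4 ^ ell m
        ≤ 4 ^ (m - 1 - p.natDegree) * 4 ^ p.natDegree :=
          Nat.mul_le_mul le_rfl (Nat.pow_le_pow_right (by norm_num) (ell_le_natDegree hm hp))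
      _ = 4 ^ (m - 1) := by
        rw [← pow_add, Nat.sub_add_cancel (natDegree_le_of_mem_geomPolyFactors hm hp)]
  calc (badPairs m).ncard * 4 ^ ell m
      ≤ (∑ p ∈ geomPolyFactors m, (I p ×ˢ I p).ncard) * 4 ^ ell m :=
        Nat.mul_le_mul_right _ ((Set.ncard_le_ncard hsub).trans (Finset.set_ncard_biUnion_le _ _))
    _ ≤ ∑ _p ∈ geomPolyFactors m, 4 ^ (m - 1) := by
        rw [Finset.sum_mul]
        exact Finset.sum_le_sum hterm
    _ ≤ (m - 1) * 4 ^ (m - 1) := by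
        rw [Finset.sum_const, smul_eq_mul]
        exact Nat.mul_le_mul_right _ (card_geomPolyFactors_le hm)

def maxDimFraction (m : ℕ) : ℝ :=
  (Nat.card {p : R2 m × R2 m // p.1 ∈ Jm m ∧ p.2 ∈ Jm m ∧ dimCab m p.1 p.2 = m - 1} : ℝ) /
    (Nat.card {p : R2 m × R2 m // p.1 ∈ Jm m ∧ p.2 ∈ Jm m} : ℝ)

lemma maxDimFraction_eq (hm : 0 < m) :
    maxDimFraction m = 1 - ((badPairs m).ncard : ℝ) / 4 ^ (m - 1) := by
  have := finite_R2 hm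
  set P := (Jm m : Set (R2 m)) ×ˢ (Jm m : Set (R2 m))
  have hJ : (Jm m : Set (R2 m)).ncard = 2 ^ (m - 1) := card_Jm hm
  have hP : Nat.card {p : R2 m × R2 m // p.1 ∈ Jm m ∧ p.2 ∈ Jm m} = 4 ^ (m - 1) := by
    rw [show Nat.card {p : R2 m × R2 m // p.1 ∈ Jm m ∧ p.2 ∈ Jm m} = P.ncard from rfl,
      Set.ncard_prod, hJ, ← mul_pow]
    rfl
  have hgood : Nat.card {p : R2 m × R2 m // p.1 ∈ Jm m ∧ p.2 ∈ Jm m ∧ dimCab m p.1 p.2 = m - 1}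
      = (P ∩ {p | dimCab m p.1 p.2 = m - 1}).ncard :=
    Nat.card_congr (Equiv.subtypeEquivRight fun _ => and_assoc.symm)
  have hsplit := Set.ncard_inter_add_ncard_sdiff_eq_ncard P {p | dimCab m p.1 p.2 = m - 1}
  rw [← hgood, show P.ncard = _ from hP] at hsplit
  rw [maxDimFraction, hP, eq_sub_iff_add_eq, Nat.cast_pow, Nat.cast_ofNat, ← add_div,
    div_eq_one_iff_eq (by positivity)]
  exact_mod_cast hsplit

lemma cast_le_two_pow_ell (hm : 2 ≤ m) (h : Real.logb 2 m / ell m ≤ 1) :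
    (m : ℝ) ≤ 2 ^ ell m := by
  have hℓ : (0 : ℝ) < ell m := by exact_mod_cast one_le_ell hm
  rw [div_le_one hℓ, Real.logb_le_iff_le_rpow (by norm_num) (by positivity),
    Real.rpow_natCast] at h
  exact h

lemma ncard_badPairs_div_le (hm : 2 ≤ m) (h : Real.logb 2 m / ell m ≤ 1) :
    ((badPairs m).ncard : ℝ) / 4 ^ (m - 1) ≤ (m : ℝ)⁻¹ := by
  have hbad : ((badPairs m).ncard : ℝ) * 4 ^ ell m ≤ m * 4 ^ (m - 1) := by
    have := ncard_badPairs_mul_le (m := m) (by omega)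
    calc ((badPairs m).ncard : ℝ) * 4 ^ ell m ≤ ((m - 1 : ℕ) : ℝ) * 4 ^ (m - 1) := by
          exact_mod_cast this
      _ ≤ m * 4 ^ (m - 1) := by gcongr; exact_mod_cast Nat.sub_le m 1
  have hsq : (m : ℝ) ^ 2 ≤ 4 ^ ell m := by
    rw [show (4 : ℝ) ^ ell m = (2 ^ ell m) ^ 2 by rw [← pow_mul, mul_comm, pow_mul]; norm_num]
    exact pow_le_pow_left₀ (by positivity) (cast_le_two_pow_ell hm h) 2
  have hm0 : (0 : ℝ) < m := by positivity
  rw [div_le_iff₀ (by positivity), inv_mul_eq_div, le_div_iff₀ hm0]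
  nlinarith [Nat.cast_nonneg (α := ℝ) (badPairs m).ncard]

open Filter Topology in
theorem statement11_general (ms : ℕ → ℕ)
    (htop : Tendsto (fun i => (ms i : ℝ)) atTop atTop)
    (hlog : Tendsto (fun i => Real.logb 2 (ms i) / (ell (ms i) : ℝ)) atTop (nhds 0)) :
    Tendsto (fun i =>
      (Nat.card {p : R2 (ms i) × R2 (ms i) // p.1 ∈ Jm (ms i) ∧ p.2 ∈ Jm (ms i) ∧
          dimCab (ms i) p.1 p.2 = ms i - 1} : ℝ) /
      (Nat.card {p : R2 (ms i) × R2 (ms i) // p.1 ∈ Jm (ms i) ∧ p.2 ∈ Jm (ms i)} : ℝ))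
      atTop (nhds 1) := by
  change Tendsto (fun i => maxDimFraction (ms i)) atTop (𝓝 1)
  have hbig : ∀ᶠ i in atTop, 2 ≤ ms i := by
    filter_upwards [htop.eventually_ge_atTop 2] with i hi
    exact_mod_cast hi
  have hratio : ∀ᶠ i in atTop, Real.logb 2 (ms i) / ell (ms i) ≤ 1 :=
    hlog.eventually (ge_mem_nhds one_pos)
  have hlower : Tendsto (fun i => 1 - (ms i : ℝ)⁻¹) atTop (𝓝 1) := by
    simpa using tendsto_const_nhds.sub (tendsto_inv_atTop_zero.comp htop)
  refine tendsto_of_tendsto_of_tendsto_of_le_of_le' hlower tendsto_const_nhds ?_ ?_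
  · filter_upwards [hbig, hratio] with i hm hr
    rw [maxDimFraction_eq (by omega)]
    linarith [ncard_badPairs_div_le hm hr]
  · filter_upwards [hbig] with i hm
    rw [maxDimFraction_eq (by omega)]
    linarith [show 0 ≤ ((badPairs (ms i)).ncard : ℝ) / 4 ^ (ms i - 1) by positivity]

open Filter Topology in
/-- If `m_i` are odd, `m_i → ∞` and `log₂(m_i)/ℓ_{m_i} → 0`, then the
fraction of pairs `(a,b) ∈ J_{m_i} × J_{m_i}` with `dim C_{a,b} = m_i - 1` tends to `1`. -/
theorem statement11 (ms : ℕ → ℕ) (hodd : ∀ i, Odd (ms i)) (hpos : ∀ i, 0 < ms i)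
    (htop : Tendsto (fun i => (ms i : ℝ)) atTop atTop)
    (hlog : Tendsto (fun i => Real.logb 2 (ms i) / (ell (ms i) : ℝ)) atTop (nhds 0)) :
    Tendsto (fun i =>
      (Nat.card {p : R2 (ms i) × R2 (ms i) // p.1 ∈ Jm (ms i) ∧ p.2 ∈ Jm (ms i) ∧
          dimCab (ms i) p.1 p.2 = ms i - 1} : ℝ) /
      (Nat.card {p : R2 (ms i) × R2 (ms i) // p.1 ∈ Jm (ms i) ∧ p.2 ∈ Jm (ms i)} : ℝ))
      atTop (nhds 1) :=
  statement11_general ms htop hlog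

end
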